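/- arXiv:1909.02961 — 4 statements merged into one kernel-verified Lean document; each statement's English description precedes it below -/
import Mathlib

section
/- For the matrix A with rows (1/2,1/3,1/6), (1/3,1/3,1/3), (1/6,1/3,1/2), every distribution θ on {1,2,3} with θ₁ = θ₃ satisfies θA = (1/3,1/3,1/3), and every such θ is a fixed point of the IBU update rule with empirical distribution q = (1/3,1/3,1/3). -/
/-- For the mechanism `A` with rows (1/2,1/3,1/6), (1/3,1/3,1/3), (1/6,1/3,1/2),
every distribution θ with θ₁ = θ₃ satisfies θA = (1/3,1/3,1/3), and every
such θ is a fixed point of the IBU update with empirical distribution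
q = (1/3,1/3,1/3). -/
theorem ibu_fixed_points
    (A : Matrix (Fin 3) (Fin 3) ℝ)
    (hA : A = !![1/2, 1/3, 1/6; 1/3, 1/3, 1/3; 1/6, 1/3, 1/2])
    (q : Fin 3 → ℝ) (hq : q = fun _ => 1/3)
    (θ : Fin 3 → ℝ) (hθnn : ∀ x, 0 ≤ θ x) (hθsum : ∑ x, θ x = 1)
    (hθ13 : θ 0 = θ 2) :
    (∀ z, ∑ x, θ x * A x z = 1/3) ∧
    (∀ x, (∑ z, q z * (θ x * A x z / ∑ u, θ u * A u z)) = θ x) := by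
  rw [Fin.sum_univ_three] at hθsum
  have hcol : ∀ z, ∑ x, θ x * A x z = 1/3 := by
    intro z
    fin_cases z <;> simp [hA, Fin.sum_univ_three] <;> linarith
  refine ⟨hcol, fun x => ?_⟩
  simp only [Fin.sum_univ_three] at hcol ⊢
  rw [hcol 0, hcol 1, hcol 2, hq]
  fin_cases x <;> simp [hA, Matrix.vecHead, Matrix.vecTail] <;> ring_nf <;> linarith
end

section
/- Let X be a finite set with a distribution θ' satisfying L(θ') > -∞, where L(θ) = Σ_{i∈I} log(Σ_x θ_x g_{xi}). Suppose there is a subset I' ⊆ I of indices such that for every pair of distinct distributions θ, φ on X, (θ - φ)·G(I') ≠ 0, where G(I') is the matrix of columns g_{·i} for i ∈ I'. Then L has a unique global maximizer over the set of distributions on X with finite log-likelihood. -/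
open Finset

/-- Uniqueness of the MLE: if there exists a distribution with finite
log-likelihood, and a set of indices `I'` such that distinct distributions
yield different output probability vectors on `I'` (i.e.
`(θ - φ)·G(I') ≠ 0`), then the log-likelihood `L` has a unique global
maximizer over the distributions on `X` with finite log-likelihood. -/
theorem mle_unique {X : Type*} [Fintype X] {n : ℕ}
    (g : X → Fin n → ℝ) (hg : ∀ x i, 0 ≤ g x i)
    (L : (X → ℝ) → ℝ)
    (hL : ∀ θ, L θ = ∑ i, Real.log (∑ x, θ x * g x i))
    (θ' : X → ℝ) (hθ'nn : ∀ x, 0 ≤ θ' x) (hθ'sum : ∑ x, θ' x = 1)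
    (hθ'fin : ∀ i, 0 < ∑ x, θ' x * g x i)
    (I' : Finset (Fin n))
    (hsep : ∀ θ φ : X → ℝ, (∀ x, 0 ≤ θ x) → ∑ x, θ x = 1 →
      (∀ x, 0 ≤ φ x) → ∑ x, φ x = 1 → θ ≠ φ →
      ∃ i ∈ I', ∑ x, (θ x - φ x) * g x i ≠ 0) :
    ∃! θhat : X → ℝ,
      ((∀ x, 0 ≤ θhat x) ∧ ∑ x, θhat x = 1 ∧
        (∀ i, 0 < ∑ x, θhat x * g x i)) ∧
      ∀ φ : X → ℝ, (∀ x, 0 ≤ φ x) → ∑ x, φ x = 1 →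
        (∀ i, 0 < ∑ x, φ x * g x i) → L φ ≤ L θhat := by
  classical
  -- notation
  set F : (X → ℝ) → Fin n → ℝ := fun θ i => ∑ x, θ x * g x i with hFdef
  set B : Fin n → ℝ := fun i => ∑ x, g x i with hBdef
  -- each column has positive sum
  have hub : ∀ (θ : X → ℝ), (∀ x, 0 ≤ θ x) → (∑ x, θ x = 1) → ∀ j, F θ j ≤ B j := by
    intro θ hnn hsum j
    apply Finset.sum_le_sum
    intro x _
    have hx1 : θ x ≤ 1 := by
      calc θ x ≤ ∑ y, θ y := Finset.single_le_sum (fun y _ => hnn y) (mem_univ x)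
      _ = 1 := hsum
    nlinarith [hg x j, hnn x]
  have hBpos : ∀ i, 0 < B i := fun i =>
    lt_of_lt_of_le (hθ'fin i) (hub θ' hθ'nn hθ'sum i)
  set c : ℝ := L θ' - ∑ j, Real.log (B j) with hcdef
  set ε : Fin n → ℝ := fun i => Real.exp c * B i with hεdef
  have hεpos : ∀ i, 0 < ε i := fun i => mul_pos (Real.exp_pos c) (hBpos i)
  -- key lower bound on the superlevel set
  have key : ∀ θ : X → ℝ, (∀ x, 0 ≤ θ x) → (∑ x, θ x = 1) →
      (∀ i, 0 < F θ i) → L θ' ≤ L θ → ∀ i, ε i ≤ F θ i := by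
    intro θ hnn hsum hfin hLθ i
    have hlogub : ∀ j, Real.log (F θ j) ≤ Real.log (B j) := by
      intro j
      gcongr
      · exact hfin j
      · exact hub θ hnn hsum j
    have hsplit : Real.log (F θ i) = L θ - ∑ j ∈ univ.erase i, Real.log (F θ j) := by
      rw [hL]
      rw [← Finset.add_sum_erase _ (fun j => Real.log (F θ j)) (mem_univ i)]
      ring
    have h2 : ∑ j ∈ univ.erase i, Real.log (F θ j)
        ≤ (∑ j, Real.log (B j)) - Real.log (B i) := by
      have h3 : (∑ j, Real.log (B j))
          = Real.log (B i) + ∑ j ∈ univ.erase i, Real.log (B j) :=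
        (Finset.add_sum_erase _ (fun j => Real.log (B j)) (mem_univ i)).symm
      have h4 : ∑ j ∈ univ.erase i, Real.log (F θ j)
          ≤ ∑ j ∈ univ.erase i, Real.log (B j) :=
        Finset.sum_le_sum (fun j _ => hlogub j)
      linarith
    have hlogε : Real.log (ε i) = c + Real.log (B i) := by
      rw [hεdef]
      rw [Real.log_mul (Real.exp_pos c).ne' (hBpos i).ne', Real.log_exp]
    have h5 : Real.log (ε i) ≤ Real.log (F θ i) := by
      rw [hlogε, hsplit, hcdef]
      linarith
    have h6 := Real.exp_le_exp.2 h5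
    rwa [Real.exp_log (hεpos i), Real.exp_log (hfin i)] at h6
  -- the compact set K
  set K : Set (X → ℝ) :=
    {θ | (∀ x, 0 ≤ θ x) ∧ (∑ x, θ x = 1) ∧ ∀ i, ε i ≤ F θ i} with hKdef
  have hθ'K : θ' ∈ K :=
    ⟨hθ'nn, hθ'sum, key θ' hθ'nn hθ'sum hθ'fin le_rfl⟩
  have hFcont : ∀ i, Continuous fun θ : X → ℝ => F θ i := fun i =>
    continuous_finset_sum _ fun x _ => (continuous_apply x).mul continuous_const
  have hKclosed : IsClosed K := by
    have h1 : IsClosed {θ : X → ℝ | ∀ x, 0 ≤ θ x} := by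
      have : {θ : X → ℝ | ∀ x, 0 ≤ θ x} = ⋂ x, {θ : X → ℝ | 0 ≤ θ x} := by
        ext θ; simp
      rw [this]
      exact isClosed_iInter fun x => isClosed_le continuous_const (continuous_apply x)
    have h2 : IsClosed {θ : X → ℝ | ∑ x, θ x = 1} :=
      isClosed_eq (continuous_finset_sum _ fun x _ => continuous_apply x) continuous_const
    have h3 : IsClosed {θ : X → ℝ | ∀ i, ε i ≤ F θ i} := by
      have : {θ : X → ℝ | ∀ i, ε i ≤ F θ i} = ⋂ i, {θ : X → ℝ | ε i ≤ F θ i} := by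
        ext θ; simp
      rw [this]
      exact isClosed_iInter fun i => isClosed_le continuous_const (hFcont i)
    have : K = {θ : X → ℝ | ∀ x, 0 ≤ θ x} ∩
        ({θ : X → ℝ | ∑ x, θ x = 1} ∩ {θ : X → ℝ | ∀ i, ε i ≤ F θ i}) := by
      ext θ; simp [hKdef, Set.mem_setOf_eq, and_assoc]
    rw [this]
    exact h1.inter (h2.inter h3)
  have hKcompact : IsCompact K := by
    apply IsCompact.of_isClosed_subset (isCompact_closedBall (0 : X → ℝ) 1) hKclosed
    intro θ hθ
    rw [Metric.mem_closedBall, dist_zero_right]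
    apply pi_norm_le_iff_of_nonneg zero_le_one |>.2
    intro x
    rw [Real.norm_eq_abs, abs_le]
    constructor
    · linarith [hθ.1 x]
    · calc θ x ≤ ∑ y, θ y := Finset.single_le_sum (fun y _ => hθ.1 y) (mem_univ x)
      _ = 1 := hθ.2.1
  have hLfun : L = fun θ => ∑ i, Real.log (F θ i) := funext hL
  have hLcont : ContinuousOn L K := by
    rw [hLfun]
    apply continuousOn_finset_sum
    intro i _
    intro θ₀ hθ₀
    have hne : F θ₀ i ≠ 0 := (lt_of_lt_of_le (hεpos i) (hθ₀.2.2 i)).ne'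
    exact (ContinuousAt.log ((hFcont i).continuousAt) hne).continuousWithinAt
  obtain ⟨θhat, hθhatK, hmax⟩ := hKcompact.exists_isMaxOn ⟨θ', hθ'K⟩ hLcont
  have hθhatfin : ∀ i, 0 < F θhat i := fun i =>
    lt_of_lt_of_le (hεpos i) (hθhatK.2.2 i)
  -- θhat is a global maximizer over S
  have hglobal : ∀ φ : X → ℝ, (∀ x, 0 ≤ φ x) → (∑ x, φ x = 1) →
      (∀ i, 0 < F φ i) → L φ ≤ L θhat := by
    intro φ hnn hsum hfin
    by_cases h : L θ' ≤ L φ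
    · exact hmax ⟨hnn, hsum, key φ hnn hsum hfin h⟩
    · exact le_trans (le_of_not_ge h) (hmax hθ'K)
  -- uniqueness: any maximizer equals θhat
  have huniq : ∀ ψ₁ ψ₂ : X → ℝ,
      (∀ x, 0 ≤ ψ₁ x) → (∑ x, ψ₁ x = 1) → (∀ i, 0 < F ψ₁ i) →
      (∀ x, 0 ≤ ψ₂ x) → (∑ x, ψ₂ x = 1) → (∀ i, 0 < F ψ₂ i) →
      L ψ₂ ≤ L ψ₁ → L ψ₁ ≤ L ψ₂ → L θhat ≤ L ψ₁ → ψ₁ = ψ₂ := by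
    intro ψ₁ ψ₂ h1nn h1sum h1fin h2nn h2sum h2fin hle hle' hmax1'
    by_contra hne
    obtain ⟨i0, _, hi0⟩ := hsep ψ₁ ψ₂ h1nn h1sum h2nn h2sum hne
    have hFne : F ψ₁ i0 ≠ F ψ₂ i0 := by
      intro h
      apply hi0
      have : ∑ x, (ψ₁ x - ψ₂ x) * g x i0 = F ψ₁ i0 - F ψ₂ i0 := by
        rw [hFdef]
        rw [← Finset.sum_sub_distrib]
        apply Finset.sum_congr rfl
        intro x _; ring
      rw [this, h, sub_self]
    -- the midpoint
    set ψ : X → ℝ := fun x => (ψ₁ x + ψ₂ x) / 2 with hψdef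
    have hψnn : ∀ x, 0 ≤ ψ x := fun x => by
      have := h1nn x; have := h2nn x
      simp only [hψdef]; linarith
    have hψsum : ∑ x, ψ x = 1 := by
      simp only [hψdef]
      rw [← Finset.sum_div, Finset.sum_add_distrib, h1sum, h2sum]
      norm_num
    have hFψ : ∀ i, F ψ i = (1:ℝ)/2 * F ψ₁ i + (1:ℝ)/2 * F ψ₂ i := by
      intro i
      simp only [hFdef, hψdef]
      rw [Finset.mul_sum, Finset.mul_sum, ← Finset.sum_add_distrib]
      apply Finset.sum_congr rfl
      intro x _; ring
    have hψfin : ∀ i, 0 < F ψ i := by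
      intro i
      rw [hFψ i]
      have := h1fin i; have := h2fin i
      linarith
    -- concavity: termwise inequality, strict at i0
    have hterm : ∀ i, (1:ℝ)/2 * Real.log (F ψ₁ i) + (1:ℝ)/2 * Real.log (F ψ₂ i)
        ≤ Real.log (F ψ i) := by
      intro i
      have := strictConcaveOn_log_Ioi.concaveOn.2 (Set.mem_Ioi.2 (h1fin i))
        (Set.mem_Ioi.2 (h2fin i)) (by norm_num : (0:ℝ) ≤ 1/2)
        (by norm_num : (0:ℝ) ≤ 1/2) (by norm_num)
      rw [smul_eq_mul, smul_eq_mul, smul_eq_mul, smul_eq_mul] at this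
      rw [hFψ i]
      exact this
    have hterm0 : (1:ℝ)/2 * Real.log (F ψ₁ i0) + (1:ℝ)/2 * Real.log (F ψ₂ i0)
        < Real.log (F ψ i0) := by
      have := strictConcaveOn_log_Ioi.2 (Set.mem_Ioi.2 (h1fin i0))
        (Set.mem_Ioi.2 (h2fin i0)) hFne (by norm_num : (0:ℝ) < 1/2)
        (by norm_num : (0:ℝ) < 1/2) (by norm_num)
      rw [smul_eq_mul, smul_eq_mul, smul_eq_mul, smul_eq_mul] at this
      rw [hFψ i0]
      exact this
    have hsumlt : ∑ i, ((1:ℝ)/2 * Real.log (F ψ₁ i) + (1:ℝ)/2 * Real.log (F ψ₂ i))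
        < ∑ i, Real.log (F ψ i) :=
      Finset.sum_lt_sum (fun i _ => hterm i) ⟨i0, mem_univ i0, hterm0⟩
    have hLψ : (1:ℝ)/2 * L ψ₁ + (1:ℝ)/2 * L ψ₂ < L ψ := by
      rw [hL ψ₁, hL ψ₂, hL ψ]
      rw [Finset.mul_sum, Finset.mul_sum, ← Finset.sum_add_distrib]
      exact hsumlt
    have hψle : L ψ ≤ L θhat := hglobal ψ hψnn hψsum hψfin
    linarith [hLψ, hψle, hmax1', hle, hle']
  refine ⟨θhat, ⟨⟨hθhatK.1, hθhatK.2.1, hθhatfin⟩, hglobal⟩, ?_⟩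
  rintro φhat ⟨⟨hnn, hsum, hfin⟩, hmaxφ⟩
  have h1 : L φhat ≤ L θhat := hglobal φhat hnn hsum hfin
  have h2 : L θhat ≤ L φhat := hmaxφ θhat hθhatK.1 hθhatK.2.1 hθhatfin
  exact huniq φhat θhat hnn hsum hfin hθhatK.1 hθhatK.2.1 hθhatfin h2 h1 h2
end

section
/- Let x₁ < x₂ < … < x_m be integers, 0 < α < 1, and let M be the m×m matrix with entries M_{ij} = α^{|x_i - x_j|}. Then M is invertible; equivalently, the only row vector v with v·M = 0 is v = 0. -/
lemma geo_det_pos (α : ℝ) (hα0 : 0 < α) (hα1 : α < 1) :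
    ∀ (m : ℕ) (x : Fin m → ℤ), StrictMono x →
      0 < Matrix.det (Matrix.of fun i j => α ^ (x i - x j).natAbs) := by
  intro m
  induction m with
  | zero => intro x hx; simp [Matrix.det_fin_zero]
  | succ n ih =>
    intro x hx
    cases n with
    | zero => simp
    | succ k =>
      set M : Matrix (Fin (k + 2)) (Fin (k + 2)) ℝ :=
        Matrix.of fun i j => α ^ (x i - x j).natAbs with hMdef
      set c : ℝ := α ^ (x 1 - x 0).natAbs with hc
      have h01 : x 0 < x 1 := hx (by norm_num)
      have hd : (x 1 - x 0).natAbs ≠ 0 := by omega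
      have hc0 : 0 < c := pow_pos hα0 _
      have hc1 : c < 1 := pow_lt_one₀ hα0.le hα1 hd
      have hne : (0 : Fin (k + 2)) ≠ 1 := by simp
      have hdet := Matrix.det_updateRow_add_smul_self M hne (-c)
      set N := Matrix.updateRow M 0 (M 0 + (-c) • M 1) with hNdef
      have hrow0 : ∀ j : Fin (k+2), N 0 j = if j = 0 then 1 - c^2 else 0 := by
        intro j
        rw [hNdef, Matrix.updateRow_self]
        by_cases hj : j = 0
        · subst hj
          simp only [Pi.add_apply, Pi.smul_apply, hMdef, Matrix.of_apply, smul_eq_mul,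
            sub_self, Int.natAbs_zero, pow_zero, hc]
          simp only [if_true]
          ring
        · have h0j : x 0 < x j := hx (Fin.pos_of_ne_zero hj)
          have h1j : x 1 ≤ x j := by
            rcases eq_or_ne j 1 with rfl | hj1
            · exact le_refl _
            · refine (hx ?_).le
              have hjpos : (0:Fin (k+2)) < j := Fin.pos_of_ne_zero hj
              have hv1 : (j:ℕ) ≠ 1 := by simpa [Fin.ext_iff, Fin.val_one] using hj1
              rw [Fin.lt_def] at hjpos ⊢
              rw [Fin.val_one]
              omega
          have key : (x 0 - x j).natAbs = (x 1 - x 0).natAbs + (x 1 - x j).natAbs := by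
            omega
          simp only [Pi.add_apply, Pi.smul_apply, hMdef, Matrix.of_apply, smul_eq_mul, hj, if_false]
          rw [key, pow_add, hc]
          ring
      have hsub : N.submatrix Fin.succ Fin.succ =
          Matrix.of fun i j : Fin (k+1) => α ^ ((x ∘ Fin.succ) i - (x ∘ Fin.succ) j).natAbs := by
        ext i j
        simp [hNdef, Matrix.updateRow_ne (Fin.succ_ne_zero i), hMdef]
      have hdetN : N.det = (1 - c^2) * (N.submatrix Fin.succ Fin.succ).det := by
        rw [Matrix.det_succ_row_zero]
        rw [Finset.sum_eq_single 0]
        · simp [hrow0, Fin.succAbove_zero]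
        · intro b _ hb
          simp [hrow0, hb]
        · simp
      have ihpos := ih (x ∘ Fin.succ) (hx.comp Fin.strictMono_succ)
      rw [← hdet, hdetN, hsub]
      have : (0:ℝ) < 1 - c^2 := by nlinarith
      positivity

/-- The geometric-mechanism kernel matrix `M i j = α^{|xᵢ - xⱼ|}` with
`x₁ < … < x_m` integers and `0 < α < 1` is invertible; equivalently the only
row vector `v` with `v·M = 0` is `v = 0`. -/
theorem geometric_matrix_invertible {m : ℕ}
    (x : Fin m → ℤ) (hx : StrictMono x)
    (α : ℝ) (hα0 : 0 < α) (hα1 : α < 1)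
    (M : Matrix (Fin m) (Fin m) ℝ)
    (hM : ∀ i j, M i j = α ^ (x i - x j).natAbs) :
    IsUnit M ∧ (∀ v : Fin m → ℝ, Matrix.vecMul v M = 0 → v = 0) := by
  have hMeq : M = Matrix.of fun i j => α ^ (x i - x j).natAbs := by
    ext i j; exact hM i j
  have hdet : M.det ≠ 0 := by
    rw [hMeq]; exact (geo_det_pos α hα0 hα1 m x hx).ne'
  have hU : IsUnit M := by
    rw [Matrix.isUnit_iff_isUnit_det]
    exact isUnit_iff_ne_zero.mpr hdet
  refine ⟨hU, fun v hv => ?_⟩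
  have hud : IsUnit M.det := isUnit_iff_ne_zero.mpr hdet
  have := congrArg (fun w => Matrix.vecMul w M⁻¹) hv
  simpa [Matrix.vecMul_vecMul, Matrix.mul_nonsing_inv M hud, Matrix.vecMul_one,
    Matrix.zero_vecMul] using this
end

section
/- Let x₁ < … < x_m be integers, 0 < α < 1, and c₁,…,c_m > 0, and let M be the m×m matrix with entries M_{ij} = c_j · α^{|x_i - x_j|}. Then M is invertible. -/
/-- The truncated-geometric-mechanism matrix `M i j = c j * α^{|xᵢ - xⱼ|}`
with `x₁ < … < x_m` integers, `0 < α < 1` and positive column scalings `c j`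
is invertible. -/
theorem truncated_geometric_matrix_invertible {m : ℕ}
    (x : Fin m → ℤ) (hx : StrictMono x)
    (α : ℝ) (hα0 : 0 < α) (hα1 : α < 1)
    (c : Fin m → ℝ) (hc : ∀ j, 0 < c j)
    (M : Matrix (Fin m) (Fin m) ℝ)
    (hM : ∀ i j, M i j = c j * α ^ (x i - x j).natAbs) :
    IsUnit M := by
  classical
  -- the row-operation matrix
  set L : Matrix (Fin m) (Fin m) ℝ := fun i j =>
    if i = j then 1 else if (i : ℕ) = (j : ℕ) + 1 then
      -(α ^ (x i - x j).natAbs) else 0 with hL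
  -- compute (L * M) i j
  have key : ∀ i j : Fin m, (L * M) i j =
      M i j + (if h : (i : ℕ) = 0 then 0 else
        -(α ^ (x i - x ⟨(i : ℕ) - 1, by omega⟩).natAbs) *
          M ⟨(i : ℕ) - 1, by omega⟩ j) := by
    intro i j
    rw [Matrix.mul_apply]
    by_cases h0 : (i : ℕ) = 0
    · rw [dif_pos h0]
      rw [Finset.sum_eq_single i]
      · simp [hL]
      · intro k _ hk
        have hk' : ¬ i = k := fun h => hk h.symm
        have h2 : ¬ (i : ℕ) = (k : ℕ) + 1 := by omega
        simp [hL, hk', h2]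
      · simp
    · set ip : Fin m := ⟨(i : ℕ) - 1, by omega⟩ with hip
      rw [dif_neg h0]
      have hne : i ≠ ip := by
        intro h
        have := congrArg (Fin.val) h
        simp [hip] at this
        omega
      have step : ∀ k : Fin m, L i k * M k j =
          (if k = i then M i j else 0) +
          (if k = ip then -(α ^ (x i - x ip).natAbs) * M ip j else 0) := by
        intro k
        by_cases h1 : k = i
        · subst h1
          simp [hL, hne]
        · by_cases h2 : k = ip
          · subst h2
            have hii : ¬ i = ip := hne
            have hval : (ip : ℕ) = (i : ℕ) - 1 := rfl
            have hcond : (i : ℕ) = (ip : ℕ) + 1 := by omega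
            have hLval : L i ip = -(α ^ (x i - x ip).natAbs) := by
              simp only [hL]
              rw [if_neg hii, if_pos hcond]
            rw [hLval, if_neg h1, if_pos rfl, zero_add]
          · have hii : ¬ i = k := fun h => h1 h.symm
            have hcond : ¬ (i : ℕ) = (k : ℕ) + 1 := by
              intro h
              apply h2
              apply Fin.ext
              simp [hip]; omega
            simp [hL, hii, hcond, h1, h2]
      rw [Finset.sum_congr rfl (fun k _ => step k), Finset.sum_add_distrib]
      simp
    -- triangularity
  have tri : (L * M).BlockTriangular id := by
    intro i j hij
    simp only [id] at hij
    have h0 : (i : ℕ) ≠ 0 := by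
      have := hij; omega
    rw [key i j, dif_neg h0]
    set ip : Fin m := ⟨(i : ℕ) - 1, by omega⟩ with hip
    have hji : (j : Fin m) ≤ ip := by
      rw [Fin.le_def]; simp [hip]; omega
    have hipi : ip < i := by rw [Fin.lt_def]; simp [hip]; omega
    have h1 : (0:ℤ) ≤ x i - x ip := le_of_lt (by linarith [hx hipi])
    have h2 : (0:ℤ) ≤ x ip - x j := by
      rcases eq_or_lt_of_le hji with h | h
      · simp [← h]
      · linarith [hx h]
    have habs : (x i - x j).natAbs = (x i - x ip).natAbs + (x ip - x j).natAbs := by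
      have : x i - x j = (x i - x ip) + (x ip - x j) := by ring
      rw [this, Int.natAbs_add_of_nonneg h1 h2]
    rw [hM, hM, habs, pow_add]
    ring
  -- diagonal entries are nonzero
  have diag : ∀ i : Fin m, (L * M) i i ≠ 0 := by
    intro i
    rw [key i i]
    by_cases h0 : (i : ℕ) = 0
    · rw [dif_pos h0, hM]
      simp only [sub_self, Int.natAbs_zero, pow_zero, mul_one, add_zero]
      exact ne_of_gt (hc i)
    · rw [dif_neg h0]
      set ip : Fin m := ⟨(i : ℕ) - 1, by omega⟩ with hip
      have hipi : ip < i := by rw [Fin.lt_def]; simp [hip]; omega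
      have h1 : (0:ℤ) < x i - x ip := by linarith [hx hipi]
      have heq : (x ip - x i).natAbs = (x i - x ip).natAbs := by
        rw [← Int.natAbs_neg]; ring_nf
      rw [hM, hM, heq]
      simp only [sub_self, Int.natAbs_zero, pow_zero, mul_one]
      set d := (x i - x ip).natAbs with hd
      have hd1 : 1 ≤ d := by
        rw [hd]
        omega
      have hlt : α ^ d < 1 := pow_lt_one₀ (le_of_lt hα0) hα1 (by omega)
      have hge : 0 < α ^ d := pow_pos hα0 d
      have : c i + -(α ^ d) * (c i * α ^ d) = c i * (1 - α ^ d * α ^ d) := by ring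
      rw [this]
      have : 0 < 1 - α ^ d * α ^ d := by nlinarith
      exact ne_of_gt (mul_pos (hc i) this)
  -- L is lower triangular with unit diagonal
  have triL : L.BlockTriangular OrderDual.toDual := by
    intro i j hij
    have hij' : (i : ℕ) < (j : ℕ) := hij
    have h1 : ¬ i = j := by intro h; subst h; omega
    have h2 : ¬ (i : ℕ) = (j : ℕ) + 1 := by omega
    simp [hL, h1, h2]
  have detL : L.det = 1 := by
    rw [Matrix.det_of_lowerTriangular L triL]
    apply Finset.prod_eq_one
    intro i _
    simp [hL]
  have detLM : (L * M).det ≠ 0 := by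
    rw [Matrix.det_of_upperTriangular tri]
    exact Finset.prod_ne_zero_iff.mpr fun i _ => diag i
  have : M.det ≠ 0 := by
    intro h
    apply detLM
    rw [Matrix.det_mul, h, mul_zero]
  rw [Matrix.isUnit_iff_isUnit_det]
  exact isUnit_iff_ne_zero.mpr this
end
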